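/- Let R be a 2×2 correlation matrix [[1, ρ],[ρ, 1]]. Then tr(R^{1/2}) = √(1+ρ) + √(1−ρ), and the normalized Bures-Wasserstein dependence D₁ between the two univariate components equals (2 − √(1−ρ) − √(1+ρ))/(2 − √2), which is 0 iff ρ = 0 and 1 iff |ρ| = 1, and is monotone increasing in |ρ|. -/

import Mathlib

open Matrix

/-- The positive semidefinite square root `A^{1/2}` of a matrix
(junk value `0` if `A` is not positive semidefinite). -/
noncomputable def msqrt {n : Type*} [Fintype n] [DecidableEq n]
    (A : Matrix n n ℝ) : Matrix n n ℝ := by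
  classical exact if h : A.PosSemidef then
    (h.1.eigenvectorUnitary : Matrix n n ℝ) * diagonal (((↑) : ℝ → ℝ) ∘ (Real.sqrt ·) ∘ h.1.eigenvalues) *
      (star h.1.eigenvectorUnitary : Matrix n n ℝ) else 0

/-- The squared Bures-Wasserstein distance
`d_W²(R, S) = tr R + tr S − 2 tr((R^{1/2} S R^{1/2})^{1/2})`. -/
noncomputable def dWsq {n : Type*} [Fintype n] [DecidableEq n]
    (R S : Matrix n n ℝ) : ℝ :=
  R.trace + S.trace - 2 * (msqrt (msqrt R * S * msqrt R)).trace

/-- The normalized Bures-Wasserstein dependence coefficient `D₁` between the two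
components of a bivariate Gaussian copula with correlation `ρ` :
`D₁ = d_W²(R, I₂) / (4 − 2√2)` (the denominator being `d_W²(R_m, I₂)` for the all-ones
matrix `R_m`, and the marginal terms vanishing since `d_i = 1`). -/
noncomputable def D1biv (ρ : ℝ) : ℝ :=
  dWsq !![1, ρ; ρ, 1] (1 : Matrix (Fin 2) (Fin 2) ℝ) / (4 - 2 * Real.sqrt 2)

open scoped MatrixOrder

/-!
`R = [[1, ρ], [ρ, 1]]` has eigenvalues `1 ± ρ` on the fixed eigenvectors `(1, ±1)`, so its
square root is the explicit matrix `½ [[s + t, s - t], [s - t, s + t]]` with `s = √(1 + ρ)`,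
`t = √(1 - ρ)`; uniqueness of positive semidefinite square roots identifies it with `msqrt R`.
Against the identity the Bures-Wasserstein distance collapses to `tr R + 2 - 2 tr R^{1/2}`, and
everything else is about `s + t`, whose square `2 + 2 √(1 - ρ²)` is decreasing in `ρ²`.
-/

section MatrixSqrt

variable {n : Type*} [Fintype n] [DecidableEq n]

lemma msqrt_eq_cfcSqrt {A : Matrix n n ℝ} (hA : A.PosSemidef) : msqrt A = CFC.sqrt A := by
  have hc := hA.1.cfc_eq Real.sqrt
  rw [IsHermitian.cfc, Unitary.conjStarAlgAut_apply] at hc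
  rw [msqrt, dif_pos hA, CFC.sqrt_eq_real_sqrt A hA.nonneg, cfcₙ_eq_cfc (hf0 := Real.sqrt_zero)]
  exact hc.symm

lemma msqrt_mul_self {A : Matrix n n ℝ} (hA : A.PosSemidef) : msqrt A * msqrt A = A := by
  rw [msqrt_eq_cfcSqrt hA, CFC.sqrt_mul_sqrt_self A hA.nonneg]

lemma msqrt_eq_of_mul_self {A B : Matrix n n ℝ} (hB : B.PosSemidef) (h : B * B = A) :
    msqrt A = B := by
  have hA : A.PosSemidef := by
    simpa only [hB.1.eq, h] using posSemidef_conjTranspose_mul_self B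
  rw [msqrt_eq_cfcSqrt hA]
  exact CFC.sqrt_unique h hB.nonneg

lemma dWsq_one_right {R : Matrix n n ℝ} (hR : R.PosSemidef) :
    dWsq R 1 = R.trace + Fintype.card n - 2 * (msqrt R).trace := by
  rw [dWsq, mul_one, msqrt_mul_self hR, trace_one]

end MatrixSqrt

lemma posSemidef_symm_fin_two {a b : ℝ} (h : |b| ≤ a) : (!![a, b; b, a]).PosSemidef := by
  rw [Matrix.posSemidef_iff_dotProduct_mulVec]
  refine ⟨by ext i j; fin_cases i <;> fin_cases j <;> rfl, fun x => ?_⟩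
  obtain ⟨hb₁, hb₂⟩ := abs_le.mp h
  simp only [dotProduct, Pi.star_apply, star_trivial, mulVec, of_apply, cons_val',
    cons_val_fin_one, Fin.sum_univ_two, cons_val_zero, cons_val_one]
  nlinarith [mul_nonneg (sub_nonneg.2 hb₂) (sq_nonneg (x 0 - x 1)),
    mul_nonneg (neg_le_iff_add_nonneg.1 hb₁) (sq_nonneg (x 0 + x 1))]

lemma msqrt_symm_fin_two {a b : ℝ} (h : |b| ≤ a) :
    msqrt !![a, b; b, a] =
      !![(√(a + b) + √(a - b)) / 2, (√(a + b) - √(a - b)) / 2;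
        (√(a + b) - √(a - b)) / 2, (√(a + b) + √(a - b)) / 2] := by
  obtain ⟨hb₁, hb₂⟩ := abs_le.mp h
  have hs := Real.sq_sqrt (show 0 ≤ a + b by linarith)
  have ht := Real.sq_sqrt (show 0 ≤ a - b by linarith)
  have hs₀ := Real.sqrt_nonneg (a + b)
  have ht₀ := Real.sqrt_nonneg (a - b)
  refine msqrt_eq_of_mul_self (posSemidef_symm_fin_two (abs_le.mpr ⟨by linarith, by linarith⟩)) ?_
  ext i j
  fin_cases i <;> fin_cases j <;>
    simp only [Fin.zero_eta, Fin.mk_one, Matrix.mul_apply, of_apply, cons_val', cons_val_fin_one,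
      cons_val_zero, cons_val_one, Fin.sum_univ_two] <;>
    first
    | linear_combination (hs + ht) / 2
    | linear_combination (hs - ht) / 2

lemma trace_msqrt_symm_fin_two {a b : ℝ} (h : |b| ≤ a) :
    (msqrt !![a, b; b, a]).trace = √(a + b) + √(a - b) := by
  rw [msqrt_symm_fin_two h, trace_fin_two_of]
  ring

lemma D1biv_eq {ρ : ℝ} (hρ : |ρ| ≤ 1) :
    D1biv ρ = (2 - √(1 - ρ) - √(1 + ρ)) / (2 - √2) := by
  have hR := posSemidef_symm_fin_two hρ
  rw [D1biv, dWsq_one_right hR, trace_msqrt_symm_fin_two hρ, trace_fin_two_of, Fintype.card_fin,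
    show (4 : ℝ) - 2 * √2 = 2 * (2 - √2) by ring]
  push_cast
  rw [← mul_div_mul_left _ (2 - √2) two_ne_zero]
  ring_nf

section CorrelationSqrtSum

variable {ρ σ : ℝ}

lemma sqrt_one_add_add_sqrt_one_sub (h : |ρ| ≤ 1) :
    √(1 + ρ) + √(1 - ρ) = √(2 + 2 * √(1 - ρ ^ 2)) := by
  obtain ⟨h₁, h₂⟩ := abs_le.mp h
  have hs := Real.sq_sqrt (show 0 ≤ 1 + ρ by linarith)
  have ht := Real.sq_sqrt (show 0 ≤ 1 - ρ by linarith)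
  have hst : √(1 + ρ) * √(1 - ρ) = √(1 - ρ ^ 2) := by
    rw [← Real.sqrt_mul (by linarith)]; ring_nf
  rw [← Real.sqrt_sq (by positivity : 0 ≤ √(1 + ρ) + √(1 - ρ))]
  congr 1
  linear_combination hs + ht + 2 * hst

lemma sqrt_one_add_add_sqrt_one_sub_eq_two_iff (h : |ρ| ≤ 1) :
    √(1 + ρ) + √(1 - ρ) = 2 ↔ ρ = 0 := by
  rw [sqrt_one_add_add_sqrt_one_sub h, Real.sqrt_eq_iff_eq_sq (by positivity) zero_le_two,
    show (2 : ℝ) ^ 2 = 2 + 2 * 1 by norm_num, add_right_inj, mul_right_inj' two_ne_zero,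
    Real.sqrt_eq_one, sub_eq_self, sq_eq_zero_iff]

lemma sqrt_one_add_add_sqrt_one_sub_eq_sqrt_two_iff (h : |ρ| ≤ 1) :
    √(1 + ρ) + √(1 - ρ) = √2 ↔ |ρ| = 1 := by
  have hρ : ρ ^ 2 ≤ 1 := by simpa using sq_le_sq.2 (h.trans (abs_one).ge)
  rw [sqrt_one_add_add_sqrt_one_sub h, Real.sqrt_inj (by positivity) zero_le_two,
    add_eq_left, mul_eq_zero_iff_left two_ne_zero, Real.sqrt_eq_zero (sub_nonneg.2 hρ), sub_eq_zero,
    eq_comm, ← sq_abs, pow_eq_one_iff_of_nonneg (abs_nonneg ρ) two_ne_zero]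

lemma sqrt_one_add_add_sqrt_one_sub_anti (hρσ : |ρ| ≤ |σ|) (hσ : |σ| ≤ 1) :
    √(1 + σ) + √(1 - σ) ≤ √(1 + ρ) + √(1 - ρ) := by
  rw [sqrt_one_add_add_sqrt_one_sub hσ, sqrt_one_add_add_sqrt_one_sub (hρσ.trans hσ)]
  have : ρ ^ 2 ≤ σ ^ 2 := sq_le_sq.2 hρσ
  gcongr

end CorrelationSqrtSum

/-- For `R = [[1,ρ],[ρ,1]]` with `|ρ| ≤ 1` : `tr(R^{1/2}) = √(1+ρ) + √(1−ρ)`, the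
normalized dependence is `D₁ = (2 − √(1−ρ) − √(1+ρ))/(2 − √2)`, which is `0` iff
`ρ = 0`, `1` iff `|ρ| = 1`, and is monotone increasing in `|ρ|`. -/
theorem D1biv_spec :
    (∀ ρ : ℝ, |ρ| ≤ 1 →
        (msqrt !![1, ρ; ρ, 1]).trace = Real.sqrt (1 + ρ) + Real.sqrt (1 - ρ) ∧
          D1biv ρ = (2 - Real.sqrt (1 - ρ) - Real.sqrt (1 + ρ)) / (2 - Real.sqrt 2) ∧
          (D1biv ρ = 0 ↔ ρ = 0) ∧ (D1biv ρ = 1 ↔ |ρ| = 1)) ∧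
      ∀ ρ σ : ℝ, |ρ| ≤ |σ| → |σ| ≤ 1 → D1biv ρ ≤ D1biv σ := by
  have hden : 0 < 2 - √2 := sub_pos.2 (Real.sqrt_two_lt_three_halves.trans (by norm_num))
  refine ⟨fun ρ hρ => ⟨trace_msqrt_symm_fin_two hρ, D1biv_eq hρ, ?_, ?_⟩, fun ρ σ hρσ hσ => ?_⟩
  · rw [D1biv_eq hρ, div_eq_zero_iff, or_iff_left hden.ne',
      ← sqrt_one_add_add_sqrt_one_sub_eq_two_iff hρ]
    constructor <;> intro h <;> linarith
  · rw [D1biv_eq hρ, div_eq_one_iff_eq hden.ne',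
      ← sqrt_one_add_add_sqrt_one_sub_eq_sqrt_two_iff hρ]
    constructor <;> intro h <;> linarith
  · rw [D1biv_eq (hρσ.trans hσ), D1biv_eq hσ, div_le_div_iff_of_pos_right hden]
    linarith [sqrt_one_add_add_sqrt_one_sub_anti hρσ hσ]
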